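/- Let S be a semigroup with finite R-height whose kernel is completely simple, and let A be a left ideal of S. Then H_R(A) ≤ 2n − 1, where n is the maximum length of a chain of R-classes of S that intersect A. -/
import Mathlib


/-!
Common definitions: Green's preorder/relation computed inside a subsemigroup,
chains of R-classes, R-height, bi-ideals, one- and two-sided ideals,
the kernel, and completely simple (sub)semigroups.
-/

variable {S : Type*}

/-- Green's preorder `≤_B` computed with multipliers from `B`:
`a ≤_B b` iff `a ∈ bB¹`, i.e. `a = b` or `a = b*s` for some `s ∈ B`. -/
def RLe [Semigroup S] (B : Set S) (a b : S) : Prop :=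
  a = b ∨ ∃ s ∈ B, a = b * s

/-- The strict version `<_B` of Green's preorder. -/
def RLt [Semigroup S] (B : Set S) (a b : S) : Prop :=
  RLe B a b ∧ ¬ RLe B b a

/-- Green's relation `R` computed with multipliers from `B`. -/
def REquiv [Semigroup S] (B : Set S) (a b : S) : Prop :=
  RLe B a b ∧ RLe B b a

/-- There is a chain of `n` (distinct, linearly ordered) `R`-classes of the
subsemigroup `B`, with all representatives lying in `C`. -/
def HasRChain [Semigroup S] (B C : Set S) (n : ℕ) : Prop :=
  ∃ f : Fin n → S, (∀ i, f i ∈ C) ∧ ∀ i j : Fin n, i < j → RLt B (f i) (f j)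

/-- There is a chain of `n` `R`-classes of `S`, each of which is contained in `C`. -/
def HasRChainInside [Semigroup S] (C : Set S) (n : ℕ) : Prop :=
  ∃ f : Fin n → S, (∀ i, ∀ x : S, REquiv Set.univ x (f i) → x ∈ C) ∧
    ∀ i j : Fin n, i < j → RLt (Set.univ : Set S) (f i) (f j)

/-- The `R`-height of the subsemigroup `B`: the supremum of the lengths
(cardinalities) of chains of `R_B`-classes. -/
noncomputable def RHeight [Semigroup S] (B : Set S) : ℕ∞ :=
  sSup ((fun n : ℕ => (n : ℕ∞)) '' {n : ℕ | HasRChain B B n})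

/-- A bi-ideal of `S`: a nonempty subset `B` with `BS¹B ⊆ B`. -/
def IsBiIdeal [Semigroup S] (B : Set S) : Prop :=
  B.Nonempty ∧ ∀ b ∈ B, ∀ c ∈ B, b * c ∈ B ∧ ∀ s : S, b * s * c ∈ B

/-- A right ideal of `S`: a nonempty subset `A` with `AS ⊆ A`. -/
def IsRightIdeal [Semigroup S] (A : Set S) : Prop :=
  A.Nonempty ∧ ∀ a ∈ A, ∀ s : S, a * s ∈ A

/-- A left ideal of `S`: a nonempty subset `A` with `SA ⊆ A`. -/
def IsLeftIdeal [Semigroup S] (A : Set S) : Prop :=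
  A.Nonempty ∧ ∀ a ∈ A, ∀ s : S, s * a ∈ A

/-- A two-sided ideal of `S`. -/
def IsTwoSidedIdealSet [Semigroup S] (A : Set S) : Prop :=
  IsRightIdeal A ∧ IsLeftIdeal A

/-- `K` is the kernel (minimum two-sided ideal) of `S`. -/
def IsKernel [Semigroup S] (K : Set S) : Prop :=
  IsTwoSidedIdealSet K ∧ ∀ A : Set S, IsTwoSidedIdealSet A → K ⊆ A

/-- A right ideal of the subsemigroup `K` of `S`. -/
def IsRightIdealIn [Semigroup S] (K A : Set S) : Prop :=
  A.Nonempty ∧ A ⊆ K ∧ ∀ a ∈ A, ∀ k ∈ K, a * k ∈ A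

/-- A left ideal of the subsemigroup `K` of `S`. -/
def IsLeftIdealIn [Semigroup S] (K A : Set S) : Prop :=
  A.Nonempty ∧ A ⊆ K ∧ ∀ a ∈ A, ∀ k ∈ K, k * a ∈ A

/-- A two-sided ideal of the subsemigroup `K` of `S`. -/
def IsIdealIn [Semigroup S] (K A : Set S) : Prop :=
  IsRightIdealIn K A ∧ IsLeftIdealIn K A

/-- The subsemigroup `K` of `S` is completely simple: it is simple (has no
proper two-sided ideals) and possesses both a minimal right ideal and a
minimal left ideal. -/
def IsCompletelySimple [Semigroup S] (K : Set S) : Prop :=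
  K.Nonempty ∧ (∀ a ∈ K, ∀ b ∈ K, a * b ∈ K) ∧
  (∀ A : Set S, IsIdealIn K A → A = K) ∧
  (∃ A : Set S, IsRightIdealIn K A ∧ ∀ A' : Set S, IsRightIdealIn K A' → A' ⊆ A → A' = A) ∧
  (∃ A : Set S, IsLeftIdealIn K A ∧ ∀ A' : Set S, IsLeftIdealIn K A' → A' ⊆ A → A' = A)


section AuxStatement14

variable {S : Type*} [Semigroup S]

private lemma rle_of_rleA {A : Set S} {a b : S} (h : RLe A a b) :
    RLe (Set.univ : Set S) a b :=
  h.imp id fun ⟨s, _, e⟩ => ⟨s, trivial, e⟩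

private lemma rle_univ_trans {a b c : S} (h1 : RLe (Set.univ : Set S) a b)
    (h2 : RLe (Set.univ : Set S) b c) : RLe (Set.univ : Set S) a c := by
  rcases h1 with rfl | ⟨s, -, rfl⟩
  · exact h2
  · rcases h2 with rfl | ⟨t, -, rfl⟩
    · exact Or.inr ⟨s, trivial, rfl⟩
    · exact Or.inr ⟨t * s, trivial, mul_assoc _ _ _⟩

/-- No three elements of a chain of `R_A`-classes can lie in a single
`R_S`-class, when `A` is a left ideal. -/
private lemma no_three {A : Set S} (hA : IsLeftIdeal A) {a b c : S}
    (hab : RLt A a b) (hbc : RLt A b c) (hca : RLe (Set.univ : Set S) c a) : False := by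
  rcases hbc.1 with heq | ⟨v, hv, hbv⟩
  · exact hbc.2 (Or.inl heq.symm)
  · rcases hca with rfl | ⟨s, -, rfl⟩
    · exact hab.2 (Or.inr ⟨v, hv, hbv⟩)
    · exact hab.2 (Or.inr ⟨s * v, hA.2 v hv s, by rw [hbv, mul_assoc]⟩)

/-- Every element of a completely simple subsemigroup is regular inside it. -/
private lemma cs_regular {K : Set S} (hCS : IsCompletelySimple K) {b : S} (hb : b ∈ K) :
    ∃ k ∈ K, b = b * (k * b) := by
  obtain ⟨hKne, hmul, hsimp, hminR, hminL⟩ := hCS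
  -- a left translate of a minimal right ideal is a minimal right ideal
  have transl : ∀ a ∈ K, ∀ R : Set S, IsRightIdealIn K R →
      (∀ R', IsRightIdealIn K R' → R' ⊆ R → R' = R) →
      IsRightIdealIn K {x | ∃ r ∈ R, x = a * r} ∧
      ∀ R', IsRightIdealIn K R' → R' ⊆ {x | ∃ r ∈ R, x = a * r} →
        R' = {x | ∃ r ∈ R, x = a * r} := by
    intro a ha R hR hRmin
    obtain ⟨⟨r0, hr0⟩, hRK, hRcl⟩ := hR
    have hIdeal : IsRightIdealIn K {x | ∃ r ∈ R, x = a * r} := by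
      refine ⟨⟨a * r0, r0, hr0, rfl⟩, ?_, ?_⟩
      · rintro x ⟨r, hr, rfl⟩
        exact hmul a ha r (hRK hr)
      · rintro x ⟨r, hr, rfl⟩ k hk
        exact ⟨r * k, hRcl r hr k hk, mul_assoc a r k⟩
    refine ⟨hIdeal, ?_⟩
    intro R' hR' hsub
    have hT : IsRightIdealIn K {r | r ∈ R ∧ a * r ∈ R'} := by
      obtain ⟨x, hx⟩ := hR'.1
      obtain ⟨r, hr, hxr⟩ := hsub hx
      refine ⟨⟨r, hr, hxr ▸ hx⟩, fun y hy => hRK hy.1, ?_⟩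
      intro y hy k hk
      refine ⟨hRcl y hy.1 k hk, ?_⟩
      rw [← mul_assoc]
      exact hR'.2.2 _ hy.2 k hk
    have hTR : {r | r ∈ R ∧ a * r ∈ R'} = R := hRmin _ hT fun y hy => hy.1
    apply Set.Subset.antisymm hsub
    rintro x ⟨r, hr, rfl⟩
    have hrT : r ∈ {r | r ∈ R ∧ a * r ∈ R'} := by rw [hTR]; exact hr
    exact hrT.2
  -- a right translate of a minimal left ideal is a minimal left ideal
  have translL : ∀ a ∈ K, ∀ L : Set S, IsLeftIdealIn K L →
      (∀ L', IsLeftIdealIn K L' → L' ⊆ L → L' = L) →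
      IsLeftIdealIn K {x | ∃ r ∈ L, x = r * a} ∧
      ∀ L', IsLeftIdealIn K L' → L' ⊆ {x | ∃ r ∈ L, x = r * a} →
        L' = {x | ∃ r ∈ L, x = r * a} := by
    intro a ha L hL hLmin
    obtain ⟨⟨r0, hr0⟩, hLK, hLcl⟩ := hL
    have hIdeal : IsLeftIdealIn K {x | ∃ r ∈ L, x = r * a} := by
      refine ⟨⟨r0 * a, r0, hr0, rfl⟩, ?_, ?_⟩
      · rintro x ⟨r, hr, rfl⟩
        exact hmul r (hLK hr) a ha
      · rintro x ⟨r, hr, rfl⟩ k hk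
        exact ⟨k * r, hLcl r hr k hk, (mul_assoc k r a).symm⟩
    refine ⟨hIdeal, ?_⟩
    intro L' hL' hsub
    have hT : IsLeftIdealIn K {r | r ∈ L ∧ r * a ∈ L'} := by
      obtain ⟨x, hx⟩ := hL'.1
      obtain ⟨r, hr, hxr⟩ := hsub hx
      refine ⟨⟨r, hr, hxr ▸ hx⟩, fun y hy => hLK hy.1, ?_⟩
      intro y hy k hk
      refine ⟨hLcl y hy.1 k hk, ?_⟩
      rw [mul_assoc]
      exact hL'.2.2 _ hy.2 k hk
    have hTL : {r | r ∈ L ∧ r * a ∈ L'} = L := hLmin _ hT fun y hy => hy.1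
    apply Set.Subset.antisymm hsub
    rintro x ⟨r, hr, rfl⟩
    have hrT : r ∈ {r | r ∈ L ∧ r * a ∈ L'} := by rw [hTL]; exact hr
    exact hrT.2
  -- every element of K lies in a minimal right ideal
  have memMinR : ∀ c ∈ K, ∃ R : Set S, (IsRightIdealIn K R ∧
      ∀ R', IsRightIdealIn K R' → R' ⊆ R → R' = R) ∧ c ∈ R := by
    intro c hc
    obtain ⟨R₀, hR₀, hR₀min⟩ := hminR
    have hUK : {x : S | ∃ R : Set S, (IsRightIdealIn K R ∧
        ∀ R', IsRightIdealIn K R' → R' ⊆ R → R' = R) ∧ x ∈ R} = K := by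
      apply hsimp
      constructor
      · refine ⟨?_, ?_, ?_⟩
        · obtain ⟨x, hx⟩ := hR₀.1
          exact ⟨x, R₀, ⟨hR₀, hR₀min⟩, hx⟩
        · rintro x ⟨R, ⟨hR, -⟩, hxR⟩
          exact hR.2.1 hxR
        · rintro x ⟨R, hR, hxR⟩ k hk
          exact ⟨R, hR, hR.1.2.2 x hxR k hk⟩
      · refine ⟨?_, ?_, ?_⟩
        · obtain ⟨x, hx⟩ := hR₀.1
          exact ⟨x, R₀, ⟨hR₀, hR₀min⟩, hx⟩
        · rintro x ⟨R, ⟨hR, -⟩, hxR⟩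
          exact hR.2.1 hxR
        · rintro x ⟨R, ⟨hR, hRmin⟩, hxR⟩ k hk
          obtain ⟨hI, hM⟩ := transl k hk R hR hRmin
          exact ⟨_, ⟨hI, hM⟩, ⟨x, hxR, rfl⟩⟩
    rw [← hUK] at hc
    exact hc
  -- every element of K lies in a minimal left ideal
  have memMinL : ∀ c ∈ K, ∃ L : Set S, (IsLeftIdealIn K L ∧
      ∀ L', IsLeftIdealIn K L' → L' ⊆ L → L' = L) ∧ c ∈ L := by
    intro c hc
    obtain ⟨L₀, hL₀, hL₀min⟩ := hminL
    have hUK : {x : S | ∃ L : Set S, (IsLeftIdealIn K L ∧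
        ∀ L', IsLeftIdealIn K L' → L' ⊆ L → L' = L) ∧ x ∈ L} = K := by
      apply hsimp
      constructor
      · refine ⟨?_, ?_, ?_⟩
        · obtain ⟨x, hx⟩ := hL₀.1
          exact ⟨x, L₀, ⟨hL₀, hL₀min⟩, hx⟩
        · rintro x ⟨L, ⟨hL, -⟩, hxL⟩
          exact hL.2.1 hxL
        · rintro x ⟨L, ⟨hL, hLmin⟩, hxL⟩ k hk
          obtain ⟨hI, hM⟩ := translL k hk L hL hLmin
          exact ⟨_, ⟨hI, hM⟩, ⟨x, hxL, rfl⟩⟩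
      · refine ⟨?_, ?_, ?_⟩
        · obtain ⟨x, hx⟩ := hL₀.1
          exact ⟨x, L₀, ⟨hL₀, hL₀min⟩, hx⟩
        · rintro x ⟨L, ⟨hL, -⟩, hxL⟩
          exact hL.2.1 hxL
        · rintro x ⟨L, hL, hxL⟩ k hk
          exact ⟨L, hL, hL.1.2.2 x hxL k hk⟩
    rw [← hUK] at hc
    exact hc
  obtain ⟨k₀, hk₀⟩ := hKne
  obtain ⟨Rb, ⟨hRb, hRbmin⟩, hbRb⟩ := memMinR b hb
  obtain ⟨Lb, ⟨hLb, hLbmin⟩, hbLb⟩ := memMinL b hb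
  -- bK = Rb ∋ b
  have hBK : IsRightIdealIn K {x | ∃ k ∈ K, x = b * k} := by
    refine ⟨⟨b * k₀, k₀, hk₀, rfl⟩, ?_, ?_⟩
    · rintro x ⟨k, hk, rfl⟩; exact hmul b hb k hk
    · rintro x ⟨k, hk, rfl⟩ k' hk'
      exact ⟨k * k', hmul k hk k' hk', mul_assoc b k k'⟩
  have hBKeq : {x | ∃ k ∈ K, x = b * k} = Rb :=
    hRbmin _ hBK (by rintro x ⟨k, hk, rfl⟩; exact hRb.2.2 b hbRb k hk)
  -- Kb = Lb ∋ b
  have hKB : IsLeftIdealIn K {x | ∃ k ∈ K, x = k * b} := by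
    refine ⟨⟨k₀ * b, k₀, hk₀, rfl⟩, ?_, ?_⟩
    · rintro x ⟨k, hk, rfl⟩; exact hmul k hk b hb
    · rintro x ⟨k, hk, rfl⟩ k' hk'
      exact ⟨k' * k, hmul k' hk' k hk, (mul_assoc k' k b).symm⟩
  have hKBeq : {x | ∃ k ∈ K, x = k * b} = Lb :=
    hLbmin _ hKB (by rintro x ⟨k, hk, rfl⟩; exact hLb.2.2 b hbLb k hk)
  -- P = bKbK is a right ideal inside bK, hence equals Rb, hence contains b
  have hP : IsRightIdealIn K {x | ∃ u ∈ K, ∃ v ∈ K, x = (b * (u * b)) * v} := by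
    refine ⟨⟨(b * (k₀ * b)) * k₀, k₀, hk₀, k₀, hk₀, rfl⟩, ?_, ?_⟩
    · rintro x ⟨u, hu, v, hv, rfl⟩
      exact hmul _ (hmul b hb _ (hmul u hu b hb)) v hv
    · rintro x ⟨u, hu, v, hv, rfl⟩ k hk
      exact ⟨u, hu, v * k, hmul v hv k hk, mul_assoc _ v k⟩
  have hPsub : {x | ∃ u ∈ K, ∃ v ∈ K, x = (b * (u * b)) * v} ⊆ {x | ∃ k ∈ K, x = b * k} := by
    rintro x ⟨u, hu, v, hv, rfl⟩
    exact ⟨(u * b) * v, hmul _ (hmul u hu b hb) v hv, by rw [mul_assoc]⟩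
  have hPeq := hRbmin _ hP (hBKeq ▸ hPsub)
  have hbP : b ∈ {x : S | ∃ u ∈ K, ∃ v ∈ K, x = (b * (u * b)) * v} := by
    rw [hPeq]; exact hbRb
  obtain ⟨u, hu, v, hv, E1⟩ := hbP
  -- Q = K·(b(ub)) is a left ideal inside Kb, hence equals Lb, hence contains b
  have hQ : IsLeftIdealIn K {x | ∃ p ∈ K, x = p * (b * (u * b))} := by
    refine ⟨⟨k₀ * (b * (u * b)), k₀, hk₀, rfl⟩, ?_, ?_⟩
    · rintro x ⟨p, hp, rfl⟩
      exact hmul p hp _ (hmul b hb _ (hmul u hu b hb))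
    · rintro x ⟨p, hp, rfl⟩ k hk
      exact ⟨k * p, hmul k hk p hp, (mul_assoc k p _).symm⟩
  have hQsub : {x | ∃ p ∈ K, x = p * (b * (u * b))} ⊆ {x | ∃ k ∈ K, x = k * b} := by
    rintro x ⟨p, hp, rfl⟩
    exact ⟨p * (b * u), hmul p hp _ (hmul b hb u hu), by rw [mul_assoc, mul_assoc]⟩
  have hQeq := hLbmin _ hQ (hKBeq ▸ hQsub)
  have hbQ : b ∈ {x : S | ∃ p ∈ K, x = p * (b * (u * b))} := by
    rw [hQeq]; exact hbLb
  obtain ⟨p, hp, E2⟩ := hbQ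
  refine ⟨v * u, hmul v hv u hu, ?_⟩
  have step1 : b * (u * b) = (b * (u * b)) * (v * (u * b)) := by
    nth_rewrite 1 [E1]
    rw [mul_assoc]
  have E3 := E2
  rw [step1] at E3
  calc b = p * ((b * (u * b)) * (v * (u * b))) := E3
    _ = (p * (b * (u * b))) * (v * (u * b)) := (mul_assoc _ _ _).symm
    _ = b * (v * (u * b)) := by rw [← E2]
    _ = b * ((v * u) * b) := by rw [mul_assoc]

end AuxStatement14

/-- If `S` has finite `R`-height and completely simple kernel, and
`A` is a left ideal of `S`, then `H_R(A) ≤ 2n - 1`, where `n` is the maximum length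
of a chain of `R_S`-classes that intersect `A`. -/
theorem leftideal_rheight_le_of_completely_simple_kernel {S : Type*} [Semigroup S]
    (hfin : RHeight (Set.univ : Set S) ≠ ⊤)
    {K : Set S} (hK : IsKernel K) (hCS : IsCompletelySimple K)
    {A : Set S} (hA : IsLeftIdeal A) (n : ℕ)
    (hchain : HasRChain (Set.univ : Set S) A n)
    (hmax : ∀ m : ℕ, HasRChain (Set.univ : Set S) A m → m ≤ n) :
    RHeight A ≤ ((2 * n - 1 : ℕ) : ℕ∞) := by
  refine sSup_le ?_
  rintro x ⟨m, hm, rfl⟩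
  show ((m : ℕ) : ℕ∞) ≤ ((2 * n - 1 : ℕ) : ℕ∞)
  rw [Nat.cast_le]
  obtain ⟨f, hfA, hf⟩ := hm
  obtain ⟨a₀, ha₀⟩ := hA.1
  have hn1 : 1 ≤ n := hmax 1 ⟨fun _ => a₀, fun _ => ha₀,
    fun i j hij => absurd (Subsingleton.elim i j) hij.ne⟩
  by_contra hcon
  have hm2n' : 2 * n ≤ m := by omega
  -- the step lemma: any two chain entries at distance ≥ 2 are strictly R_S-related
  have step : ∀ (i j : ℕ) (hi : i < m) (hj : j < m), i + 1 < j →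
      RLt (Set.univ : Set S) (f ⟨i, hi⟩) (f ⟨j, hj⟩) := by
    intro i j hi hj hij
    have hi1 : i + 1 < m := by omega
    have h1 : RLt A (f ⟨i, hi⟩) (f ⟨i + 1, hi1⟩) :=
      hf _ _ (Fin.mk_lt_mk.mpr (by omega))
    have h2 : RLt A (f ⟨i + 1, hi1⟩) (f ⟨j, hj⟩) :=
      hf _ _ (Fin.mk_lt_mk.mpr (by omega))
    exact ⟨rle_univ_trans (rle_of_rleA h1.1) (rle_of_rleA h2.1),
      fun hji => no_three hA h1 h2 hji⟩
  -- m ≤ 2n, via the chain of even positions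
  have hmle : m ≤ 2 * n := by
    by_contra hgt
    have hch : HasRChain (Set.univ : Set S) A (n + 1) := by
      refine ⟨fun p => f ⟨2 * p.1, by have := p.2; omega⟩, fun p => hfA _, ?_⟩
      intro p q hpq
      have hpq' : p.1 < q.1 := Fin.lt_def.mp hpq
      have hq2 := q.2
      exact step _ _ _ _ (by omega)
    have := hmax _ hch; omega
  have hmeq : m = 2 * n := by omega
  have h01 : (0 : ℕ) < m := by omega
  have h1m : (1 : ℕ) < m := by omega
  set a := f ⟨0, h01⟩ with ha_def
  set b := f ⟨1, h1m⟩ with hb_def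
  have hab : RLt A a b := hf ⟨0, h01⟩ ⟨1, h1m⟩ (Fin.mk_lt_mk.mpr one_pos)
  -- Step A : b ≤_S a (otherwise a longer chain of R_S-classes exists)
  have hba : RLe (Set.univ : Set S) b a := by
    by_contra hba
    have hch : HasRChain (Set.univ : Set S) A (n + 1) := by
      refine ⟨fun p => if p.1 = 0 then f ⟨0, h01⟩
        else f ⟨2 * p.1 - 1, by have := p.2; omega⟩, ?_, ?_⟩
      · intro p; dsimp only; split
        · exact hfA _
        · exact hfA _
      · intro p q hpq
        dsimp only
        have hpq' : p.1 < q.1 := Fin.lt_def.mp hpq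
        have hq2 := q.2
        by_cases hp : p.1 = 0
        · rw [if_pos hp, if_neg (show ¬ q.1 = 0 by omega)]
          by_cases hq1 : q.1 = 1
          · have e : 2 * q.1 - 1 = 1 := by omega
            simp only [e]
            exact ⟨rle_of_rleA hab.1, hba⟩
          · exact step _ _ _ _ (by omega)
        · rw [if_neg hp, if_neg (show ¬ q.1 = 0 by omega)]
          exact step _ _ _ _ (by omega)
    have := hmax _ hch; omega
  obtain heq | ⟨t, -, hbt⟩ := hba
  · exact hab.2 (Or.inl heq)
  -- Step B : a lies in the kernel
  obtain ⟨k₀, hk₀⟩ := hCS.1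
  have hzA : k₀ * a ∈ A := hA.2 a (hfA _) k₀
  have hzK : k₀ * a ∈ K := hK.1.1.2 k₀ hk₀ a
  have hwK : a * (k₀ * a) ∈ K := hK.1.2.2 _ hzK a
  have hwA : a * (k₀ * a) ∈ A := hA.2 _ hzA a
  have haK : a ∈ K := by
    by_contra haK
    have hwlt : ∀ (j : ℕ) (hj : j < m),
        ¬ RLe (Set.univ : Set S) (f ⟨j, hj⟩) (a * (k₀ * a)) := by
      intro j hj hle
      have haj : RLe (Set.univ : Set S) a (f ⟨j, hj⟩) := by
        rcases Nat.eq_zero_or_pos j with rfl | hjpos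
        · exact Or.inl rfl
        · exact rle_of_rleA (hf ⟨0, h01⟩ ⟨j, hj⟩ (Fin.mk_lt_mk.mpr hjpos)).1
      rcases rle_univ_trans haj hle with heq2 | ⟨s, -, heqs⟩
      · exact haK (heq2 ▸ hwK)
      · exact haK (heqs ▸ hK.1.1.2 _ hwK s)
    have hch : HasRChain (Set.univ : Set S) A (n + 1) := by
      refine ⟨fun p => if p.1 = 0 then a * (k₀ * a)
        else f ⟨2 * p.1 - 2, by have := p.2; omega⟩, ?_, ?_⟩
      · intro p; dsimp only; split
        · exact hwA
        · exact hfA _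
      · intro p q hpq
        dsimp only
        have hpq' : p.1 < q.1 := Fin.lt_def.mp hpq
        have hq2 := q.2
        by_cases hp : p.1 = 0
        · rw [if_pos hp, if_neg (show ¬ q.1 = 0 by omega)]
          refine ⟨?_, hwlt _ _⟩
          have hwa : RLe (Set.univ : Set S) (a * (k₀ * a)) a :=
            Or.inr ⟨k₀ * a, trivial, rfl⟩
          rcases Nat.lt_or_ge q.1 2 with hq1 | hq1
          · have e : 2 * q.1 - 2 = 0 := by omega
            simp only [e]
            exact hwa
          · exact rle_univ_trans hwa
              (rle_of_rleA (hf ⟨0, h01⟩ _ (Fin.mk_lt_mk.mpr (by omega))).1)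
        · rw [if_neg hp, if_neg (show ¬ q.1 = 0 by omega)]
          exact step _ _ _ _ (by omega)
    have := hmax _ hch; omega
  -- Step C : b ∈ K, regularity gives b ≤_A a, contradiction
  have hbK : b ∈ K := hbt ▸ hK.1.1.2 a haK t
  obtain ⟨k, hk, hreg⟩ := cs_regular hCS hbK
  refine hab.2 (Or.inr ⟨t * (k * b), hA.2 _ (hA.2 b (hfA _) k) t, ?_⟩)
  nth_rewrite 1 [hreg]
  nth_rewrite 1 [hbt]
  rw [mul_assoc]
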